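/- Let b be the bitvector of an internal node n of a full binary tree, and p the bitvector of the parent of n, where n is the right child of its parent. Then the zero-set of b is disjoint from the zero-set of p, and moreover every zero position of b is a position where p equals 1 and which corresponds to a leaf in the subtree rooted at n ('right nodes inherit the 0s of their parents shifted to 1s'). -/
import Mathlib


/-- Full binary tree: every node is a leaf or has exactly two children. -/
inductive BTree : Type
  | leaf : BTree
  | node (l r : BTree) : BTree

namespace BTree

/-- Number of leaves. -/
def numLeaves : BTree → ℕ
  | leaf => 1
  | node l r => numLeaves l + numLeaves r

/-- Number of internal (non-leaf) nodes. -/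
def internals : BTree → ℕ
  | leaf => 0
  | node l r => internals l + internals r + 1

/-- Total number of nodes. -/
def size : BTree → ℕ
  | leaf => 1
  | node l r => 1 + size l + size r

/-- Depth, with the depth of a single leaf being 1. -/
def depth : BTree → ℕ
  | leaf => 1
  | node l r => 1 + max (depth l) (depth r)

/-- The subtree at a path (`false` = go left, `true` = go right), if it exists. -/
def subtreeAt? : BTree → List Bool → Option BTree
  | t, [] => some t
  | leaf, _ :: _ => none
  | node l r, b :: p => if b then subtreeAt? r p else subtreeAt? l p

/-- Number of leaves strictly to the left of the subtree at the given path. -/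
def offsetAt : BTree → List Bool → ℕ
  | _, [] => 0
  | leaf, _ :: _ => 0
  | node l r, b :: p => if b then l.numLeaves + offsetAt r p else offsetAt l p

/-- A path denotes an internal node iff the subtree there is a `node`. -/
def isInternal (t : BTree) (p : List Bool) : Prop :=
  ∃ l r, t.subtreeAt? p = some (node l r)

/-- The set of (left-to-right) indices of the leaves of a tree whose leftmost
leaf has global index `off`. -/
def leafIdxSet : BTree → ℕ → Finset ℕ
  | leaf, off => {off}
  | node l r, off => leafIdxSet l off ∪ leafIdxSet r (off + l.numLeaves)

/-- The set of leaf indices of the left subtree of the internal node at path `p`,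
i.e. the zero positions of its bitvector. -/
def zeroSet (t : BTree) (p : List Bool) : Finset ℕ :=
  match t.subtreeAt? p with
  | some (node l _) => leafIdxSet l (t.offsetAt p)
  | _ => ∅

/-- The bitvector of the internal node at path `p`: 0 exactly at the positions of
the leaves of its left subtree, 1 elsewhere. -/
def bitvec (t : BTree) (p : List Bool) (i : ℕ) : ℤ :=
  if i ∈ t.zeroSet p then 0 else 1

/-- The set of leaf indices of the whole subtree rooted at path `p`. -/
def subtreeLeafSet (t : BTree) (p : List Bool) : Finset ℕ :=
  match t.subtreeAt? p with
  | some s => leafIdxSet s (t.offsetAt p)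
  | none => ∅

end BTree


namespace BTree

lemma mem_leafIdxSet : ∀ (s : BTree) (off i : ℕ),
    i ∈ leafIdxSet s off ↔ off ≤ i ∧ i < off + s.numLeaves
  | leaf, off, i => by simp [leafIdxSet, numLeaves]; omega
  | node l r, off, i => by
      simp [leafIdxSet, numLeaves, mem_leafIdxSet l off i,
        mem_leafIdxSet r (off + l.numLeaves) i, Finset.mem_union]
      omega

lemma subtreeAt?_append : ∀ (p : List Bool) (t : BTree) (q : List Bool),
    t.subtreeAt? (p ++ q) = (t.subtreeAt? p).bind (fun s => s.subtreeAt? q)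
  | [], t, q => by simp [subtreeAt?]
  | b :: p, leaf, q => by simp [subtreeAt?]
  | b :: p, node l r, q => by
      by_cases hb : b <;>
        simp [subtreeAt?, hb, subtreeAt?_append p l q, subtreeAt?_append p r q]

lemma offsetAt_append : ∀ (p : List Bool) (t s : BTree) (q : List Bool),
    t.subtreeAt? p = some s →
    t.offsetAt (p ++ q) = t.offsetAt p + s.offsetAt q
  | [], t, s, q, h => by
      simp [subtreeAt?] at h; subst h; simp [offsetAt]
  | b :: p, leaf, s, q, h => by simp [subtreeAt?] at h
  | b :: p, node l r, s, q, h => by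
      by_cases hb : b <;> simp [subtreeAt?, hb] at h <;>
        simp [offsetAt, hb, offsetAt_append p _ s q h] <;> omega

end BTree

/-- If `n` is the right child (path `p ++ [true]`) of the internal node at path
`p`, then the zero-set of `n`'s bitvector is disjoint from the zero-set of its
parent's bitvector; moreover every zero position of `n`'s bitvector is a position
where the parent's bitvector equals 1 and is a leaf of the subtree rooted at `n`. -/
theorem stmt17 (t : BTree) (p : List Bool)
    (hq : t.isInternal p) (hn : t.isInternal (p ++ [true])) :
    Disjoint (t.zeroSet (p ++ [true])) (t.zeroSet p) ∧
      ∀ i ∈ t.zeroSet (p ++ [true]),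
        t.bitvec p i = 1 ∧ i ∈ t.subtreeLeafSet (p ++ [true]) := by
  obtain ⟨l, r, hqs⟩ := hq
  obtain ⟨nl, nr, hns⟩ := hn
  have hsub : t.subtreeAt? (p ++ [true]) = some r := by
    rw [BTree.subtreeAt?_append, hqs]; simp [BTree.subtreeAt?]
  rw [hsub] at hns
  obtain rfl : r = BTree.node nl nr := by injection hns
  have hoff : t.offsetAt (p ++ [true]) = t.offsetAt p + l.numLeaves := by
    rw [BTree.offsetAt_append p t (BTree.node l (BTree.node nl nr)) [true] hqs]
    simp [BTree.offsetAt]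
  have hz1 : t.zeroSet (p ++ [true]) = BTree.leafIdxSet nl (t.offsetAt p + l.numLeaves) := by
    simp [BTree.zeroSet, hsub, hoff]
  have hz2 : t.zeroSet p = BTree.leafIdxSet l (t.offsetAt p) := by
    simp [BTree.zeroSet, hqs]
  have hdisj : Disjoint (t.zeroSet (p ++ [true])) (t.zeroSet p) := by
    rw [hz1, hz2, Finset.disjoint_left]
    intro i hi hi2
    rw [BTree.mem_leafIdxSet] at hi hi2
    omega
  refine ⟨hdisj, fun i hi => ⟨?_, ?_⟩⟩
  · have : i ∉ t.zeroSet p := Finset.disjoint_left.mp hdisj hi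
    simp [BTree.bitvec, this]
  · rw [hz1, BTree.mem_leafIdxSet] at hi
    simp only [BTree.subtreeLeafSet, hsub, hoff]
    simp [BTree.leafIdxSet, BTree.mem_leafIdxSet, BTree.numLeaves]
    omega
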